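/- arXiv:cs/0701189 — 9 statements merged into one kernel-verified Lean document; each statement's English description precedes it below -/
import Mathlib

section
/- In a stable configuration of the maximal matching algorithm, PRcondemned(i) is false for every node i. -/
structure Config (V : Type*) where
  p : V → Option V
  m : V → Bool

variable {V : Type*}

def PRmarried (G : SimpleGraph V) (p : V → Option V) (i : V) : Prop :=
  ∃ j, G.Adj i j ∧ p i = some j ∧ p j = some i

def PRwaiting (G : SimpleGraph V) (p : V → Option V) (i : V) : Prop :=
  ∃ j, G.Adj i j ∧ p i = some j ∧ p j ≠ some i ∧ ¬ PRmarried G p j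

def PRcondemned (G : SimpleGraph V) (p : V → Option V) (i : V) : Prop :=
  ∃ j, G.Adj i j ∧ p i = some j ∧ p j ≠ some i ∧ PRmarried G p j

def PRdead (G : SimpleGraph V) (p : V → Option V) (i : V) : Prop :=
  p i = none ∧ ∀ j, G.Adj i j → PRmarried G p j

def PRfree (G : SimpleGraph V) (p : V → Option V) (i : V) : Prop :=
  p i = none ∧ ∃ j, G.Adj i j ∧ ¬ PRmarried G p j

def Valid (G : SimpleGraph V) (C : Config V) : Prop :=
  ∀ i j, C.p i = some j → G.Adj i j

section Rules
variable [LinearOrder V]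

def UpdateEnabled (G : SimpleGraph V) (C : Config V) (i : V) : Prop :=
  ¬ (C.m i = true ↔ PRmarried G C.p i)

def MarriageEnabled (G : SimpleGraph V) (C : Config V) (i : V) : Prop :=
  (C.m i = true ↔ PRmarried G C.p i) ∧ C.p i = none ∧ ∃ j, G.Adj i j ∧ C.p j = some i

def SeductionEnabled (G : SimpleGraph V) (C : Config V) (i : V) : Prop :=
  (C.m i = true ↔ PRmarried G C.p i) ∧ C.p i = none ∧
    (∀ k, G.Adj i k → C.p k ≠ some i) ∧
    ∃ j, G.Adj i j ∧ C.p j = none ∧ i < j ∧ C.m j = false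

def AbandonmentEnabled (G : SimpleGraph V) (C : Config V) (i : V) : Prop :=
  (C.m i = true ↔ PRmarried G C.p i) ∧
    ∃ j, G.Adj i j ∧ C.p i = some j ∧ C.p j ≠ some i ∧ (C.m j = true ∨ j ≤ i)

def Eligible (G : SimpleGraph V) (C : Config V) (i : V) : Prop :=
  UpdateEnabled G C i ∨ MarriageEnabled G C i ∨ SeductionEnabled G C i ∨ AbandonmentEnabled G C i

def Stable (G : SimpleGraph V) (C : Config V) : Prop := ∀ i, ¬ Eligible G C i

def Unchanged (C C' : Config V) (i : V) : Prop := C'.p i = C.p i ∧ C'.m i = C.m i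

def DoesUpdate (G : SimpleGraph V) (C C' : Config V) (i : V) : Prop :=
  UpdateEnabled G C i ∧ C'.p i = C.p i ∧ (C'.m i = true ↔ PRmarried G C.p i)

def DoesMarriageTo (G : SimpleGraph V) (C C' : Config V) (i j : V) : Prop :=
  MarriageEnabled G C i ∧ G.Adj i j ∧ C.p j = some i ∧ C'.p i = some j ∧ C'.m i = C.m i

def DoesSeductionTo (G : SimpleGraph V) (C C' : Config V) (i j : V) : Prop :=
  SeductionEnabled G C i ∧ G.Adj i j ∧ C.p j = none ∧ i < j ∧ C.m j = false ∧
    (∀ k, G.Adj i k → C.p k = none → i < k → C.m k = false → k ≤ j) ∧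
    C'.p i = some j ∧ C'.m i = C.m i

def DoesAbandonmentFrom (G : SimpleGraph V) (C C' : Config V) (i j : V) : Prop :=
  AbandonmentEnabled G C i ∧ C.p i = some j ∧ C'.p i = none ∧ C'.m i = C.m i

def Moves (G : SimpleGraph V) (C C' : Config V) (i : V) : Prop :=
  DoesUpdate G C C' i ∨ (∃ j, DoesMarriageTo G C C' i j) ∨
    (∃ j, DoesSeductionTo G C C' i j) ∨ (∃ j, DoesAbandonmentFrom G C C' i j)

def Step (G : SimpleGraph V) (C C' : Config V) : Prop :=
  (∃ i, Moves G C C' i) ∧ ∀ i, Moves G C C' i ∨ Unchanged C C' i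

def MSAMoveTo (G : SimpleGraph V) (C C' : Config V) (i j : V) : Prop :=
  DoesMarriageTo G C C' i j ∨ DoesSeductionTo G C C' i j ∨ DoesAbandonmentFrom G C C' i j

def IJMove (G : SimpleGraph V) (C C' : Config V) (i j : V) : Prop :=
  MSAMoveTo G C C' i j ∨ MSAMoveTo G C C' j i

end Rules

theorem stable_not_condemned [Fintype V] [LinearOrder V] (G : SimpleGraph V)
    (C : Config V) (hvalid : Valid G C) (hstable : Stable G C) :
    ∀ i, ¬ PRcondemned G C.p i := by
  intro i ⟨j, hadj, hpi, hpj, hmj⟩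
  have hupd : ∀ k, C.m k = true ↔ PRmarried G C.p k := by
    intro k
    by_contra h
    exact hstable k (Or.inl h)
  exact hstable i (Or.inr (Or.inr (Or.inr
    ⟨hupd i, j, hadj, hpi, hpj, Or.inl ((hupd j).mpr hmj)⟩)))
end

section
/- In a stable configuration of the maximal matching algorithm, PRwaiting(i) is false for every node i. -/
variable {V : Type*}

theorem stable_not_waiting [Fintype V] [LinearOrder V] (G : SimpleGraph V)
    (C : Config V) (hvalid : Valid G C) (hstable : Stable G C) :
    ∀ i, ¬ PRwaiting G C.p i := by
  classical
  -- every eligibility is absent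
  have hupd : ∀ i, C.m i = true ↔ PRmarried G C.p i := by
    intro i
    by_contra h
    exact hstable i (Or.inl h)
  -- key step: waiting propagates to a strictly larger node
  have hstep : ∀ i, PRwaiting G C.p i → ∃ j, i < j ∧ PRwaiting G C.p j := by
    intro i ⟨j, hadj, hpi, hpj, hnm⟩
    -- abandonment not enabled at i
    have hab : ¬ AbandonmentEnabled G C i := fun h =>
      hstable i (Or.inr (Or.inr (Or.inr h)))
    have hij : i < j ∧ C.m j ≠ true := by
      by_contra h
      push_neg at h
      apply hab
      refine ⟨hupd i, j, hadj, hpi, hpj, ?_⟩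
      rcases eq_or_ne (C.m j) true with hm | hm
      · exact Or.inl hm
      · exact Or.inr (le_of_not_gt fun hlt => hm (h hlt))
    obtain ⟨hlt, hmj⟩ := hij
    cases hpjv : C.p j with
    | none =>
        exfalso
        apply hstable j
        exact Or.inr (Or.inl ⟨hupd j, hpjv, i, hadj.symm, hpi⟩)
    | some k =>
        have hadjjk : G.Adj j k := hvalid j k hpjv
        have hpk : C.p k ≠ some j := fun h => hnm ⟨k, hadjjk, hpjv, h⟩
        by_cases hmk : PRmarried G C.p k
        · exfalso
          apply hstable j
          exact Or.inr (Or.inr (Or.inr ⟨hupd j, k, hadjjk, hpjv, hpk,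
            Or.inl ((hupd k).mpr hmk)⟩))
        · exact ⟨j, hlt, k, hadjjk, hpjv, hpk, hmk⟩
  -- finiteness: no strictly increasing chain
  intro i hi
  obtain ⟨m, hmS, hmax⟩ := Finset.exists_max_image
    (Finset.univ.filter fun x => PRwaiting G C.p x) id
    ⟨i, Finset.mem_filter.mpr ⟨Finset.mem_univ i, hi⟩⟩
  have hm : PRwaiting G C.p m := (Finset.mem_filter.mp hmS).2
  obtain ⟨j, hmj, hj⟩ := hstep m hm
  exact absurd (hmax j (Finset.mem_filter.mpr ⟨Finset.mem_univ j, hj⟩))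
    (not_le.mpr hmj)
end

section
/- In a stable configuration of the maximal matching algorithm, PRfree(i) is false for every node i. -/
variable {V : Type*}

/-!
A free node `i` has an unmarried neighbour `j`. If `p j = none`, the smaller of `i` and `j` could
seduce the other. Otherwise `j` is waiting or condemned. A condemned node could abandon; a waiting
node `i` pointing to `j` has `i < j` (else it could abandon), and then `j` is waiting too (else
Marriage or Abandonment is enabled at `j`), so waiting nodes would form an infinite ascending chain.
-/

theorem not_PRmarried_of_eq_none {G : SimpleGraph V} {p : V → Option V} {i : V}
    (hi : p i = none) : ¬ PRmarried G p i := by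
  rintro ⟨j, -, hij, -⟩
  simp [hi] at hij

theorem PRwaiting_or_PRcondemned {G : SimpleGraph V} {p : V → Option V} {i j : V}
    (hadj : G.Adj i j) (hij : p i = some j) (hi : ¬ PRmarried G p i) :
    PRwaiting G p i ∨ PRcondemned G p i := by
  have hji : p j ≠ some i := fun hji => hi ⟨j, hadj, hij, hji⟩
  by_cases hj : PRmarried G p j
  · exact Or.inr ⟨j, hadj, hij, hji, hj⟩
  · exact Or.inl ⟨j, hadj, hij, hji, hj⟩

namespace Stable

variable [LinearOrder V] {G : SimpleGraph V} {C : Config V}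

theorem m_eq_true_iff (hstable : Stable G C) (i : V) : C.m i = true ↔ PRmarried G C.p i :=
  not_not.1 fun h => hstable i (Or.inl h)

theorem m_eq_false (hstable : Stable G C) {i : V} (hi : ¬ PRmarried G C.p i) : C.m i = false :=
  Bool.eq_false_iff.2 fun h => hi ((hstable.m_eq_true_iff i).1 h)

theorem p_ne_some_of_eq_none (hstable : Stable G C) {i k : V} (hi : C.p i = none)
    (hadj : G.Adj i k) : C.p k ≠ some i := fun hk =>
  hstable i (Or.inr (Or.inl ⟨hstable.m_eq_true_iff i, hi, k, hadj, hk⟩))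

theorem not_PRcondemned (hstable : Stable G C) (i : V) : ¬ PRcondemned G C.p i :=
  fun ⟨j, hadj, hij, hji, hj⟩ => hstable i (Or.inr (Or.inr (Or.inr
    ⟨hstable.m_eq_true_iff i, j, hadj, hij, hji, Or.inl ((hstable.m_eq_true_iff j).2 hj)⟩)))

theorem exists_gt_PRwaiting (hvalid : Valid G C) (hstable : Stable G C) {i : V}
    (hi : PRwaiting G C.p i) : ∃ j, i < j ∧ PRwaiting G C.p j := by
  obtain ⟨j, hadj, hij, hji, hj⟩ := hi
  have hlt : i < j := lt_of_not_ge fun hle => hstable i (Or.inr (Or.inr (Or.inr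
    ⟨hstable.m_eq_true_iff i, j, hadj, hij, hji, Or.inr hle⟩)))
  refine ⟨j, hlt, ?_⟩
  cases hjk : C.p j with
  | none => exact absurd hij (hstable.p_ne_some_of_eq_none hjk hadj.symm)
  | some k =>
    exact (PRwaiting_or_PRcondemned (hvalid j k hjk) hjk hj).resolve_right
      (hstable.not_PRcondemned j)

theorem not_PRwaiting [WellFoundedGT V] (hvalid : Valid G C) (hstable : Stable G C) (i : V) :
    ¬ PRwaiting G C.p i := by
  induction i using WellFoundedGT.induction with
  | _ i ih =>
    intro hi
    obtain ⟨j, hij, hj⟩ := hstable.exists_gt_PRwaiting hvalid hi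
    exact ih j hij hj

theorem p_ne_none_of_adj (hstable : Stable G C) {i j : V} (hadj : G.Adj i j)
    (hi : C.p i = none) : C.p j ≠ none := by
  intro hj
  have seduction_disabled {a b : V} (hab : G.Adj a b) (ha : C.p a = none) (hb : C.p b = none) :
      ¬ a < b := fun hlt => hstable a (Or.inr (Or.inr (Or.inl
    ⟨hstable.m_eq_true_iff a, ha, fun _ hk => hstable.p_ne_some_of_eq_none ha hk, b, hab, hb, hlt,
      hstable.m_eq_false (not_PRmarried_of_eq_none hb)⟩)))
  rcases lt_trichotomy i j with h | rfl | h
  · exact seduction_disabled hadj hi hj h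
  · exact G.loopless.irrefl i hadj
  · exact seduction_disabled hadj.symm hj hi h

end Stable

theorem stable_not_free [Fintype V] [LinearOrder V] (G : SimpleGraph V)
    (C : Config V) (hvalid : Valid G C) (hstable : Stable G C) :
    ∀ i, ¬ PRfree G C.p i := by
  rintro i ⟨hi, j, hadj, hj⟩
  cases hjk : C.p j with
  | none => exact hstable.p_ne_none_of_adj hadj hi hjk
  | some k =>
    rcases PRwaiting_or_PRcondemned (hvalid j k hjk) hjk hj with hw | hc
    · exact hstable.not_PRwaiting hvalid j hw
    · exact hstable.not_PRcondemned j hc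
end

section
/- If a node i executes an Update move setting m_i := true, then in all subsequent configurations of the execution, node i is never again eligible for any move. -/
variable {V : Type*}

lemma p_preserved [LinearOrder V] (G : SimpleGraph V) {C C' : Config V}
    (hstep : Step G C C') {i j : V} (hpi : C.p i = some j) (hpj : C.p j = some i) :
    C'.p i = some j := by
  rcases hstep.2 i with hmov | hunch
  · rcases hmov with hu | ⟨k, hM⟩ | ⟨k, hS⟩ | ⟨k, hA⟩
    · rw [hu.2.1, hpi]
    · rw [hM.1.2.1] at hpi; exact absurd hpi (by simp)
    · rw [hS.1.2.1] at hpi; exact absurd hpi (by simp)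
    · obtain ⟨⟨_, j', _, hpij', hne, _⟩, _⟩ := hA
      rw [hpi] at hpij'
      injection hpij' with h
      subst h
      exact absurd hpj hne
  · rw [hunch.1, hpi]

lemma m_preserved [LinearOrder V] (G : SimpleGraph V) {C C' : Config V}
    (hstep : Step G C C') {i : V} (hm : C.m i = true) (hmar : PRmarried G C.p i) :
    C'.m i = true := by
  rcases hstep.2 i with hmov | hunch
  · rcases hmov with hu | ⟨k, hM⟩ | ⟨k, hS⟩ | ⟨k, hA⟩
    · exact absurd (by rw [hm]; exact iff_of_true rfl hmar) hu.1
    · rw [hM.2.2.2.2, hm]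
    · rw [hS.2.2.2.2.2.2.2, hm]
    · rw [hA.2.2.2, hm]
  · rw [hunch.2, hm]

lemma not_eligible_of_married [LinearOrder V] (G : SimpleGraph V) {C : Config V}
    {i j : V} (hadj : G.Adj i j) (hm : C.m i = true)
    (hpi : C.p i = some j) (hpj : C.p j = some i) : ¬ Eligible G C i := by
  rintro (hu | hM | hS | hA)
  · exact hu (by rw [hm]; exact iff_of_true rfl ⟨j, hadj, hpi, hpj⟩)
  · rw [hM.2.1] at hpi; exact absurd hpi (by simp)
  · rw [hS.2.1] at hpi; exact absurd hpi (by simp)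
  · obtain ⟨_, j', _, hpij', hne, _⟩ := hA
    rw [hpi] at hpij'
    injection hpij' with h
    subst h
    exact hne hpj

theorem update_true_then_never_eligible [Fintype V] [LinearOrder V] (G : SimpleGraph V)
    (C : ℕ → Config V) (L : ℕ) (hstep : ∀ t, t < L → Step G (C t) (C (t+1)))
    (hvalid : Valid G (C 0))
    (i : V) (t : ℕ) (ht : t < L)
    (hupd : DoesUpdate G (C t) (C (t+1)) i) (htrue : (C (t+1)).m i = true) :
    ∀ s, t < s → s ≤ L → ¬ Eligible G (C s) i := by
  obtain ⟨hUE, hpkeep, hmiff⟩ := hupd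
  obtain ⟨j, hadj, hpi, hpj⟩ := hmiff.mp htrue
  -- invariant at all times t < s ≤ L
  have key : ∀ s, t < s → s ≤ L →
      (C s).m i = true ∧ (C s).p i = some j ∧ (C s).p j = some i := by
    intro s hs hsL
    induction s with
    | zero => omega
    | succ n ih =>
      rcases Nat.lt_or_ge t n with hn | hn
      · have hnL : n < L := by omega
        obtain ⟨hm, hpi', hpj'⟩ := ih hn (by omega)
        refine ⟨m_preserved G (hstep n hnL) hm ⟨j, hadj, hpi', hpj'⟩,
          p_preserved G (hstep n hnL) hpi' hpj',
          p_preserved G (hstep n hnL) hpj' hpi'⟩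
      · have : n = t := by omega
        subst this
        refine ⟨htrue, by rw [hpkeep, hpi], ?_⟩
        exact p_preserved G (hstep n ht) hpj hpi
  intro s hs hsL
  obtain ⟨hm, hpi', hpj'⟩ := key s hs hsL
  exact not_eligible_of_married G hadj hm hpi' hpj'
end

section
/- In any execution of the maximal matching algorithm, each node executes the Update rule at most twice. -/
variable {V : Type*}

/-!
Every step is non-increasing for the potential `[¬ married i] + [Update enabled at i]`,
which is at most `2`, and an Update of `i` strictly decreases it: an Update while married
leaves `i` married and correct, and an Update while unmarried sets `m i := false`, so the
enabling condition afterwards is exactly `married i`. Marriage persists because a married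
node is enabled for no rule that changes its pointer.
-/

theorem Finset.card_filter_range_add_le {p : ℕ → Prop} [DecidablePred p] {Φ : ℕ → ℕ} {L : ℕ}
    (h : ∀ t < L, Φ (t + 1) + (if p t then 1 else 0) ≤ Φ t) :
    ((range L).filter p).card + Φ L ≤ Φ 0 := by
  induction L with
  | zero => simp
  | succ L ih =>
    have := ih fun t ht => h t (by omega)
    have := h L (by omega)
    simp only [card_filter, sum_range_succ] at *
    omega

section Step
variable [LinearOrder V] {G : SimpleGraph V} {C C' : Config V}

theorem Step.p_eq_of_mutual {i j : V} (h : Step G C C') (hi : C.p i = some j)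
    (hj : C.p j = some i) : C'.p i = C.p i := by
  rcases h.2 i with (hU | ⟨k, hM⟩ | ⟨k, hS⟩ | ⟨k, hA⟩) | hu
  · exact hU.2.1
  · simp [DoesMarriageTo, MarriageEnabled, hi] at hM
  · simp [DoesSeductionTo, SeductionEnabled, hi] at hS
  · obtain ⟨_, j', _, hij', hne, _⟩ := hA.1
    cases hi.symm.trans hij'
    exact absurd hj hne
  · exact hu.1

theorem Step.prMarried {i : V} (h : Step G C C') (hm : PRmarried G C.p i) :
    PRmarried G C'.p i := by
  obtain ⟨j, hadj, hi, hj⟩ := hm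
  exact ⟨j, hadj, (h.p_eq_of_mutual hi hj).trans hi, (h.p_eq_of_mutual hj hi).trans hj⟩

theorem Step.m_eq_or_doesUpdate (h : Step G C C') (i : V) :
    C'.m i = C.m i ∨ DoesUpdate G C C' i := by
  rcases h.2 i with (hU | ⟨k, hM⟩ | ⟨k, hS⟩ | ⟨k, hA⟩) | hu
  · exact .inr hU
  · exact .inl hM.2.2.2.2
  · exact .inl hS.2.2.2.2.2.2.2
  · exact .inl hA.2.2.2
  · exact .inl hu.2

open scoped Classical in
noncomputable def updatePotential (G : SimpleGraph V) (C : Config V) (i : V) : ℕ :=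
  (if PRmarried G C.p i then 0 else 1) + (if UpdateEnabled G C i then 1 else 0)

open scoped Classical in
theorem Step.updatePotential_add_le (h : Step G C C') (i : V) :
    updatePotential G C' i + (if DoesUpdate G C C' i then 1 else 0) ≤ updatePotential G C i := by
  have hmar : PRmarried G C.p i → PRmarried G C'.p i := h.prMarried
  rcases h.m_eq_or_doesUpdate i with hm | hupd
  · have hno : ¬ DoesUpdate G C C' i := fun hu => hu.1 (hm ▸ hu.2.2)
    rw [if_neg hno]
    unfold updatePotential UpdateEnabled
    rw [hm]
    split_ifs <;> tauto
  · rw [if_pos hupd]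
    obtain ⟨hen, -, hm'⟩ := hupd
    unfold updatePotential UpdateEnabled at *
    split_ifs <;> simp_all

end Step

open scoped Classical in
theorem update_at_most_twice_general [LinearOrder V] (G : SimpleGraph V)
    (C : ℕ → Config V) (L : ℕ) (hstep : ∀ t, t < L → Step G (C t) (C (t+1)))
    (i : V) :
    ((Finset.range L).filter (fun t => DoesUpdate G (C t) (C (t+1)) i)).card ≤ 2 := by
  have hle := Finset.card_filter_range_add_le (Φ := fun t => updatePotential G (C t) i)
    fun t ht => (hstep t ht).updatePotential_add_le i
  have hΦ0 : updatePotential G (C 0) i ≤ 2 := by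
    unfold updatePotential
    split_ifs <;> simp
  omega

open scoped Classical in
theorem update_at_most_twice [Fintype V] [LinearOrder V] (G : SimpleGraph V)
    (C : ℕ → Config V) (L : ℕ) (hstep : ∀ t, t < L → Step G (C t) (C (t+1)))
    (hvalid : Valid G (C 0)) (i : V) :
    ((Finset.range L).filter (fun t => DoesUpdate G (C t) (C (t+1)) i)).card ≤ 2 :=
  update_at_most_twice_general G C L hstep i
end

section
/- For any edge (i,j) ∈ E, in any execution of the maximal matching algorithm under the distributed adversarial daemon there are at most three steps in which an i,j-move is performed. -/
variable {V : Type*}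

/-!
Fix an edge with endpoints `i < j` and abstract a configuration to what matters for it: the
flags of `i` and `j` and the stance of each toward the other (pointing at it, null, married to a
third node, or pointing unrequited at a third node). A step of the daemon induces a step of a
finite transition system on these abstract states, and an i,j-move is exactly a step in which
`i` or `j` turns its pointer from null to the other endpoint or back. On the abstract system an
explicit potential with values in `{0, …, 3}` never increases and drops at every such step;
both facts are finite checks. The potential works because married nodes never move again, `j`
cannot seduce the smaller `i`, and `i` abandons `j` only when `j`'s flag is set, which an Update
does only for a married `j`.
-/

/-- The stance of a node `v` toward a neighbour `u`, read off `p v`; a pointer at a third node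
is split according to whether `v` is married. -/
inductive Stance
  | partner
  | null
  | marriedOther
  | pendingOther
  deriving DecidableEq

instance : Fintype Stance :=
  .ofList [.partner, .null, .marriedOther, .pendingOther] (by rintro (_ | _ | _ | _) <;> simp)

def Stance.married : Stance → Stance → Bool
  | .partner, .partner => true
  | .marriedOther, _ => true
  | _, _ => false

structure NodeView where
  stance : Stance
  flag : Bool
  deriving DecidableEq, Fintype

/-- The effect of a step on the view of an endpoint `v` of the edge `vu`, where `x`, `y` are the
views of `v`, `u` before the step, `x'` the view of `v` after it, and `lower` says `v < u`.
The first disjunct covers idle nodes and Update moves (a third node that `v` points at may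
meanwhile answer); the others are Marriage or Seduction toward `u`, either of them toward a
third node, and Abandonment of `u` or of a third node. -/
def NodeStep (lower : Bool) (x y x' : NodeView) : Prop :=
  (x'.stance = x.stance ∨ x.stance = .pendingOther ∧ x'.stance = .marriedOther) ∧
      (x'.flag = x.flag ∨ x'.flag = x.stance.married y.stance) ∨
    x.flag = x.stance.married y.stance ∧ x'.flag = x.flag ∧
      (x.stance = .null ∧ x'.stance = .partner ∧
          (y.stance = .partner ∨ y.stance = .null ∧ lower = true ∧ y.flag = false) ∨
        x.stance = .null ∧ (x'.stance = .marriedOther ∨ x'.stance = .pendingOther) ∨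
        x.stance = .partner ∧ y.stance ≠ .partner ∧ x'.stance = .null ∧
          (y.flag = true ∨ lower = false) ∨
        x.stance = .pendingOther ∧ x'.stance = .null)

def NodeView.Flips (x x' : NodeView) : Prop :=
  x.stance = .null ∧ x'.stance = .partner ∨ x.stance = .partner ∧ x'.stance = .null

instance (lower : Bool) (x y x' : NodeView) : Decidable (NodeStep lower x y x') := by
  unfold NodeStep; infer_instance

instance (x x' : NodeView) : Decidable (x.Flips x') := by
  unfold NodeView.Flips; infer_instance

structure EdgeState where
  lo : NodeView
  hi : NodeView
  deriving DecidableEq, Fintype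

namespace EdgeState

def Step (s t : EdgeState) : Prop :=
  NodeStep true s.lo s.hi t.lo ∧ NodeStep false s.hi s.lo t.hi

def Move (s t : EdgeState) : Prop :=
  s.lo.Flips t.lo ∨ s.hi.Flips t.hi

instance (s t : EdgeState) : Decidable (s.Step t) := by unfold Step; infer_instance

instance (s t : EdgeState) : Decidable (s.Move t) := by unfold Move; infer_instance

/-- A bound on the number of further steps with a move along the edge. For instance, when `lo`
points at an unmarried `hi` whose flag is set, `lo` may abandon `hi`, seduce it again, and then
`hi` may marry `lo`. -/
def potential (s : EdgeState) : ℕ :=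
  match s.lo.stance, s.hi.stance with
  | .partner, .partner => 0
  | .partner, .marriedOther => 1
  | .partner, _ => if s.hi.flag then 3 else 1
  | .marriedOther, .partner => 1
  | .marriedOther, _ => 0
  | _, .partner => 3
  | _, .marriedOther => 0
  | _, _ => 2

theorem potential_le_three : ∀ s : EdgeState, s.potential ≤ 3 := by decide

set_option maxRecDepth 8000 in
theorem Step.potential_le {s t : EdgeState} (h : s.Step t) : t.potential ≤ s.potential := by
  revert s t
  decide

set_option maxRecDepth 8000 in
theorem Step.potential_lt {s t : EdgeState} (h : s.Step t) (hmove : s.Move t) :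
    t.potential < s.potential := by
  revert s t
  decide

end EdgeState

section Pointers

open Classical

variable {G : SimpleGraph V} {p : V → Option V} {v u k : V}

theorem not_PRmarried_of_eq_none_s12 (h : p v = none) : ¬PRmarried G p v := by
  rintro ⟨k, -, hk, -⟩
  simp [h] at hk

theorem PRmarried.eq_some_of_eq_some (hm : PRmarried G p v) (h : p v = some k) :
    p k = some v := by
  obtain ⟨k', -, hk', hk'v⟩ := hm
  rwa [Option.some_inj.mp (h.symm.trans hk')]

theorem PRmarried_iff_of_eq_some (hadj : G.Adj v u) (h : p v = some u) :
    PRmarried G p v ↔ p u = some v :=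
  ⟨fun hm => hm.eq_some_of_eq_some h, fun hu => ⟨u, hadj, h, hu⟩⟩

noncomputable def stance (G : SimpleGraph V) (p : V → Option V) (v u : V) : Stance :=
  match p v with
  | none => .null
  | some k => if k = u then .partner else if PRmarried G p v then .marriedOther else .pendingOther

theorem stance_of_eq_none (h : p v = none) : stance G p v u = .null := by
  simp [stance, h]

theorem stance_of_eq_some_self (h : p v = some u) : stance G p v u = .partner := by
  simp [stance, h]

theorem stance_of_eq_some (h : p v = some k) (hk : k ≠ u) :
    stance G p v u = if PRmarried G p v then .marriedOther else .pendingOther := by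
  simp [stance, h, hk]

theorem stance_eq_marriedOther_or_pendingOther (h : p v = some k) (hk : k ≠ u) :
    stance G p v u = .marriedOther ∨ stance G p v u = .pendingOther := by
  rw [stance_of_eq_some h hk]
  split_ifs <;> simp

theorem stance_eq_partner_iff : stance G p v u = .partner ↔ p v = some u := by
  rcases hv : p v with _ | k
  · simp [stance_of_eq_none hv]
  · by_cases hk : k = u
    · simp [hk, stance_of_eq_some_self (hv.trans (congrArg some hk))]
    · rw [stance_of_eq_some hv hk]; split_ifs <;> simp [hk]

theorem Stance.married_partner (y : Stance) :
    Stance.married .partner y = decide (y = .partner) := by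
  cases y <;> rfl

noncomputable def nodeView (G : SimpleGraph V) (C : Config V) (v u : V) : NodeView :=
  ⟨stance G C.p v u, C.m v⟩

theorem nodeView_married {C : Config V} (hadj : G.Adj v u) :
    (nodeView G C v u).stance.married (nodeView G C u v).stance = decide (PRmarried G C.p v) := by
  simp only [nodeView]
  rcases hv : C.p v with _ | k
  · simp [stance_of_eq_none hv, Stance.married, not_PRmarried_of_eq_none_s12 hv]
  · by_cases hk : k = u
    · subst hk
      simp [stance_of_eq_some_self hv, Stance.married_partner, stance_eq_partner_iff,
        PRmarried_iff_of_eq_some hadj hv]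
    · rw [stance_of_eq_some hv hk]
      split_ifs with hm <;> simp [hm, Stance.married]

theorem eq_married_of_iff {C : Config V} {b : Bool} (hadj : G.Adj v u)
    (h : b = true ↔ PRmarried G C.p v) :
    b = (nodeView G C v u).stance.married (nodeView G C u v).stance := by
  rw [nodeView_married hadj]
  exact Bool.eq_iff_iff.mpr (h.trans decide_eq_true_iff.symm)

end Pointers

section Steps

variable [LinearOrder V] {G : SimpleGraph V} {C C' : Config V} {v u k : V}

theorem Step.p_eq_of_PRmarried (hstep : Step G C C') (hm : PRmarried G C.p v) :
    C'.p v = C.p v := by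
  obtain ⟨k, -, hv, hk⟩ := hm
  rcases hstep.2 v with (hU | ⟨w, hM⟩ | ⟨w, hS⟩ | ⟨w, hA⟩) | hu
  · exact hU.2.1
  · simp [hM.1.2.1] at hv
  · simp [hS.1.2.1] at hv
  · obtain ⟨-, w', -, hw', hne, -⟩ := hA.1
    rw [hv, Option.some_inj] at hw'
    exact absurd (hw' ▸ hk) hne
  · exact hu.1

theorem PRmarried.step (hm : PRmarried G C.p v) (hstep : Step G C C') :
    PRmarried G C'.p v := by
  obtain ⟨k, hadj, hv, hk⟩ := hm
  have hmk : PRmarried G C.p k := ⟨v, hadj.symm, hk, hv⟩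
  exact ⟨k, hadj, (hstep.p_eq_of_PRmarried ⟨k, hadj, hv, hk⟩).trans hv,
    (hstep.p_eq_of_PRmarried hmk).trans hk⟩

theorem stance_step (hstep : Step G C C') (hp : C'.p v = C.p v) :
    stance G C'.p v u = stance G C.p v u ∨
      stance G C.p v u = .pendingOther ∧ stance G C'.p v u = .marriedOther := by
  rcases hv : C.p v with _ | k
  · exact Or.inl (by rw [stance_of_eq_none hv, stance_of_eq_none (hp.trans hv)])
  · by_cases hk : k = u
    · subst hk
      exact Or.inl (by rw [stance_of_eq_some_self hv, stance_of_eq_some_self (hp.trans hv)])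
    · rw [stance_of_eq_some hv hk, stance_of_eq_some (hp.trans hv) hk]
      by_cases hm : PRmarried G C.p v
      · simp [hm, hm.step hstep]
      · by_cases hm' : PRmarried G C'.p v <;> simp [hm, hm']

theorem nodeStep_of_p_eq (hstep : Step G C C') (hadj : G.Adj v u) (hp : C'.p v = C.p v)
    (hm : C'.m v = C.m v ∨ (C'.m v = true ↔ PRmarried G C.p v)) :
    NodeStep (decide (v < u)) (nodeView G C v u) (nodeView G C u v) (nodeView G C' v u) := by
  exact Or.inl ⟨stance_step hstep hp, hm.imp id (eq_married_of_iff hadj)⟩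

theorem DoesMarriageTo.nodeStep (h : DoesMarriageTo G C C' v k) (hadj : G.Adj v u) :
    NodeStep (decide (v < u)) (nodeView G C v u) (nodeView G C u v) (nodeView G C' v u) := by
  obtain ⟨⟨hcons, hnone, -⟩, -, hkv, hp', hm'⟩ := h
  refine Or.inr ⟨eq_married_of_iff hadj hcons, hm', ?_⟩
  have hnull : stance G C.p v u = .null := stance_of_eq_none hnone
  by_cases hk : k = u
  · subst hk
    exact Or.inl ⟨hnull, stance_of_eq_some_self hp', Or.inl (stance_of_eq_some_self hkv)⟩
  · exact Or.inr (Or.inl ⟨hnull, stance_eq_marriedOther_or_pendingOther hp' hk⟩)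

theorem DoesSeductionTo.nodeStep (h : DoesSeductionTo G C C' v k) (hadj : G.Adj v u) :
    NodeStep (decide (v < u)) (nodeView G C v u) (nodeView G C u v) (nodeView G C' v u) := by
  obtain ⟨⟨hcons, hnone, -⟩, -, hk_none, hvk, hmk, -, hp', hm'⟩ := h
  refine Or.inr ⟨eq_married_of_iff hadj hcons, hm', ?_⟩
  have hnull : stance G C.p v u = .null := stance_of_eq_none hnone
  by_cases hk : k = u
  · subst hk
    exact Or.inl ⟨hnull, stance_of_eq_some_self hp',
      Or.inr ⟨stance_of_eq_none hk_none, decide_eq_true hvk, hmk⟩⟩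
  · exact Or.inr (Or.inl ⟨hnull, stance_eq_marriedOther_or_pendingOther hp' hk⟩)

theorem DoesAbandonmentFrom.nodeStep (h : DoesAbandonmentFrom G C C' v k) (hadj : G.Adj v u) :
    NodeStep (decide (v < u)) (nodeView G C v u) (nodeView G C u v) (nodeView G C' v u) := by
  obtain ⟨⟨hcons, k', -, hk', hkv, hflag⟩, hvk, hp', hm'⟩ := h
  obtain rfl : k = k' := Option.some_inj.mp (hvk.symm.trans hk')
  refine Or.inr ⟨eq_married_of_iff hadj hcons, hm', ?_⟩
  have hnull : stance G C'.p v u = .null := stance_of_eq_none hp'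
  by_cases hk : k = u
  · subst hk
    refine Or.inr (Or.inr (Or.inl ⟨stance_of_eq_some_self hvk,
      fun hu => hkv (stance_eq_partner_iff.mp hu), hnull, ?_⟩))
    exact hflag.imp id fun hle => decide_eq_false (not_lt.mpr hle)
  · have hm : ¬PRmarried G C.p v := fun hm => hkv (hm.eq_some_of_eq_some hvk)
    refine Or.inr (Or.inr (Or.inr ⟨?_, hnull⟩))
    rw [nodeView, stance_of_eq_some hvk hk, if_neg hm]

theorem Step.nodeStep (hstep : Step G C C') (hadj : G.Adj v u) :
    NodeStep (decide (v < u)) (nodeView G C v u) (nodeView G C u v) (nodeView G C' v u) := by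
  rcases hstep.2 v with (hU | ⟨k, hM⟩ | ⟨k, hS⟩ | ⟨k, hA⟩) | hu
  · exact nodeStep_of_p_eq hstep hadj hU.2.1 (Or.inr hU.2.2)
  · exact hM.nodeStep hadj
  · exact hS.nodeStep hadj
  · exact hA.nodeStep hadj
  · exact nodeStep_of_p_eq hstep hadj hu.1 (Or.inl hu.2)

theorem MSAMoveTo.flips (h : MSAMoveTo G C C' v u) :
    (nodeView G C v u).Flips (nodeView G C' v u) := by
  rcases h with h | h | h
  · exact Or.inl ⟨stance_of_eq_none h.1.2.1, stance_of_eq_some_self h.2.2.2.1⟩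
  · exact Or.inl ⟨stance_of_eq_none h.1.2.1, stance_of_eq_some_self h.2.2.2.2.2.2.1⟩
  · exact Or.inr ⟨stance_of_eq_some_self h.2.1, stance_of_eq_none h.2.2.1⟩

end Steps

theorem card_filter_range_add_le {P : ℕ → Prop} [DecidablePred P] (f : ℕ → ℕ) (L : ℕ)
    (hle : ∀ t < L, f (t + 1) ≤ f t) (hlt : ∀ t < L, P t → f (t + 1) < f t) :
    ((Finset.range L).filter P).card + f L ≤ f 0 := by
  induction L with
  | zero => simp
  | succ n ih =>
    have hn := hle n n.lt_succ_self
    have ih := ih (fun t ht => hle t (by omega)) (fun t ht => hlt t (by omega))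
    rw [Finset.range_add_one, Finset.filter_insert]
    split_ifs with hP
    · have := hlt n n.lt_succ_self hP
      rw [Finset.card_insert_of_notMem (by simp)]
      omega
    · omega

section Edge

variable [LinearOrder V] {G : SimpleGraph V} {C C' : Config V} {i j : V}

noncomputable def edgeView (G : SimpleGraph V) (C : Config V) (i j : V) : EdgeState :=
  ⟨nodeView G C i j, nodeView G C j i⟩

theorem Step.edgeStep (hstep : Step G C C') (hadj : G.Adj i j) (hij : i < j) :
    (edgeView G C i j).Step (edgeView G C' i j) := by
  have hlo := hstep.nodeStep hadj
  have hhi := hstep.nodeStep hadj.symm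
  rw [decide_eq_true hij] at hlo
  rw [decide_eq_false (lt_asymm hij)] at hhi
  exact ⟨hlo, hhi⟩

theorem IJMove.edgeMove (h : IJMove G C C' i j) :
    (edgeView G C i j).Move (edgeView G C' i j) :=
  Or.imp MSAMoveTo.flips MSAMoveTo.flips h

theorem ijMove_comm : IJMove G C C' i j ↔ IJMove G C C' j i :=
  or_comm

open scoped Classical in
theorem card_ijMove_le_three_of_lt (C : ℕ → Config V) (L : ℕ)
    (hstep : ∀ t, t < L → Step G (C t) (C (t + 1))) (hadj : G.Adj i j) (hij : i < j) :
    ((Finset.range L).filter (fun t => IJMove G (C t) (C (t + 1)) i j)).card ≤ 3 := by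
  have hcount := card_filter_range_add_le (P := fun t => IJMove G (C t) (C (t + 1)) i j)
    (fun t => (edgeView G (C t) i j).potential) L
    (fun t ht => ((hstep t ht).edgeStep hadj hij).potential_le)
    (fun t ht hmove => ((hstep t ht).edgeStep hadj hij).potential_lt hmove.edgeMove)
  have := EdgeState.potential_le_three (edgeView G (C 0) i j)
  omega

end Edge

open scoped Classical in
theorem ij_moves_at_most_three_general [LinearOrder V] (G : SimpleGraph V)
    (C : ℕ → Config V) (L : ℕ) (hstep : ∀ t, t < L → Step G (C t) (C (t+1)))
    (i j : V) (hadj : G.Adj i j) :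
    ((Finset.range L).filter (fun t => IJMove G (C t) (C (t+1)) i j)).card ≤ 3 := by
  rcases lt_trichotomy i j with hij | rfl | hji
  · exact card_ijMove_le_three_of_lt C L hstep hadj hij
  · exact (G.irrefl hadj).elim
  · rw [Finset.filter_congr fun t _ => ijMove_comm]
    exact card_ijMove_le_three_of_lt C L hstep hadj.symm hji

open scoped Classical in
theorem ij_moves_at_most_three [Fintype V] [LinearOrder V] (G : SimpleGraph V)
    (C : ℕ → Config V) (L : ℕ) (hstep : ∀ t, t < L → Step G (C t) (C (t+1)))
    (hvalid : Valid G (C 0))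
    (i j : V) (hadj : G.Adj i j) :
    ((Finset.range L).filter (fun t => IJMove G (C t) (C (t+1)) i j)).card ≤ 3 :=
  ij_moves_at_most_three_general G C L hstep i j hadj
end

section
/- If the initial configuration satisfies p_i ≠ j and p_j ≠ i for an edge (i,j) with i < j, then at most two steps of the execution contain an i,j-move. -/
variable {V : Type*}

/-!
Record the relation between the pointers of `i < j` as a phase carrying the number of
i,j-moves still possible. Without pointers between them, the only possible i,j-move is a
seduction of `j` by `i`, after which `i` points to `j` while `j` is free or married elsewhere.
From there, either `j` answers with a marriage, or `i` abandons `j` because `j` is married to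
a third node; in both cases one of the two nodes is married, and a married node never makes
another Marriage, Seduction or Abandonment move. Each i,j-move thus lowers the phase by one.
-/

theorem Finset.card_filter_range_le_of_phase {P : ℕ → Prop} [DecidablePred P]
    {R : ℕ → ℕ → Prop} {L n₀ : ℕ} (h₀ : R 0 n₀)
    (hstay : ∀ t < L, ∀ n, R t n → ¬ P t → R (t + 1) n)
    (hdrop : ∀ t < L, ∀ n, R t n → P t → ∃ n', n = n' + 1 ∧ R (t + 1) n') :
    ((Finset.range L).filter P).card ≤ n₀ := by
  suffices key : ∀ t ≤ L, ∃ n, R t n ∧ ((Finset.range t).filter P).card + n ≤ n₀ by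
    obtain ⟨n, -, hn⟩ := key L le_rfl
    omega
  intro t
  induction t with
  | zero => exact fun _ => ⟨n₀, h₀, by simp⟩
  | succ t ih =>
    intro ht
    obtain ⟨n, hR, hn⟩ := ih (by omega)
    rw [Finset.range_add_one, Finset.filter_insert]
    by_cases hP : P t
    · obtain ⟨n', rfl, hR'⟩ := hdrop t ht n hR hP
      refine ⟨n', hR', ?_⟩
      rw [if_pos hP, Finset.card_insert_of_notMem (by simp)]
      omega
    · exact ⟨n, hstay t ht n hR hP, by rwa [if_neg hP]⟩

def Couple (C : Config V) (a b : V) : Prop :=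
  C.p a = some b ∧ C.p b = some a

theorem Couple.symm {C : Config V} {a b : V} (h : Couple C a b) : Couple C b a :=
  ⟨h.2, h.1⟩

theorem MarriageEnabled.m_eq_false {G : SimpleGraph V} {C : Config V} {x : V}
    (h : MarriageEnabled G C x) : C.m x = false := by
  refine Bool.eq_false_iff.2 fun hm => ?_
  obtain ⟨z, -, hz, -⟩ := h.1.1 hm
  cases h.2.1.symm.trans hz

section Moves
variable [LinearOrder V] {G : SimpleGraph V} {C C' : Config V} {x y : V}

theorem MSAMoveTo.not_of_couple (h : Couple C x y) (z : V) : ¬ MSAMoveTo G C C' x z := by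
  rintro (hmar | hsed | hab)
  · cases hmar.1.2.1.symm.trans h.1
  · cases hsed.1.2.1.symm.trans h.1
  · obtain ⟨⟨-, w, -, hw, hback, -⟩, hz, -⟩ := hab
    obtain rfl : w = y := Option.some.inj (hw.symm.trans h.1)
    exact hback h.2

theorem MSAMoveTo.p_eq_some_of_lt (hyx : y < x) (h : MSAMoveTo G C C' x y) :
    C.p y = some x ∨ C.p x = some y := by
  rcases h with hmar | hsed | hab
  · exact Or.inl hmar.2.2.1
  · exact absurd hsed.2.2.2.1 hyx.not_gt
  · exact Or.inr hab.2.1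

theorem MSAMoveTo.doesAbandonmentFrom_of_p_eq_some {z : V} (hx : C.p x = some z)
    (h : MSAMoveTo G C C' x y) : DoesAbandonmentFrom G C C' x y := by
  rcases h with hmar | hsed | hab
  · cases hmar.1.2.1.symm.trans hx
  · cases hsed.1.2.1.symm.trans hx
  · exact hab

theorem DoesAbandonmentFrom.m_eq_true_or_le (h : DoesAbandonmentFrom G C C' x y) :
    C.m y = true ∨ y ≤ x := by
  obtain ⟨⟨-, w, -, hw, -, hor⟩, hy, -⟩ := h
  obtain rfl : w = y := Option.some.inj (hw.symm.trans hy)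
  exact hor

namespace Step

variable (hS : Step G C C')
include hS

theorem p_eq_some_iff (h : ¬ MSAMoveTo G C C' x y) : C'.p x = some y ↔ C.p x = some y := by
  rcases hS.2 x with (hup | ⟨z, hmar⟩ | ⟨z, hsed⟩ | ⟨z, hab⟩) | hu
  · rw [hup.2.1]
  · obtain rfl | hzy := eq_or_ne z y
    · exact absurd (Or.inl hmar) h
    · simp [hmar.2.2.2.1, hmar.1.2.1, hzy]
  · obtain rfl | hzy := eq_or_ne z y
    · exact absurd (Or.inr (Or.inl hsed)) h
    · simp [hsed.2.2.2.2.2.2.1, hsed.1.2.1, hzy]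
  · obtain rfl | hzy := eq_or_ne z y
    · exact absurd (Or.inr (Or.inr hab)) h
    · simp [hab.2.2.1, hab.2.1, hzy]
  · rw [hu.1]

theorem m_eq_true (h : C'.m x = true) : C.m x = true ∨ PRmarried G C.p x := by
  rcases hS.2 x with (hup | ⟨_, hmar⟩ | ⟨_, hsed⟩ | ⟨_, hab⟩) | hu
  · exact Or.inr (hup.2.2.mp h)
  · exact Or.inl (hmar.2.2.2.2 ▸ h)
  · exact Or.inl (hsed.2.2.2.2.2.2.2 ▸ h)
  · exact Or.inl (hab.2.2.2 ▸ h)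
  · exact Or.inl (hu.2 ▸ h)

theorem m_eq_false (hp : C.p x = none) (hm : C.m x = false) : C'.m x = false := by
  refine Bool.eq_false_iff.2 fun hm' => ?_
  rcases hS.m_eq_true hm' with hm'' | ⟨z, -, hz, -⟩
  · simp [hm] at hm''
  · cases hp.symm.trans hz

theorem couple (h : Couple C x y) : Couple C' x y :=
  ⟨(hS.p_eq_some_iff (MSAMoveTo.not_of_couple h y)).2 h.1,
    (hS.p_eq_some_iff (MSAMoveTo.not_of_couple h.symm x)).2 h.2⟩

end Step

end Moves

inductive EdgePhase (C : Config V) (i j : V) : ℕ → Prop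
  | unlinked : C.p i ≠ some j → C.p j ≠ some i → EdgePhase C i j 2
  | courting : C.p i = some j → C.p j ≠ some i →
      (C.m j = true → ∃ k ≠ i, Couple C j k) → EdgePhase C i j 1
  | married : Couple C i j → EdgePhase C i j 0
  | jilted {k : V} : C.p i ≠ some j → k ≠ i → Couple C j k → EdgePhase C i j 0

namespace EdgePhase
variable [LinearOrder V] {G : SimpleGraph V} {C C' : Config V} {i j : V} {n : ℕ}

theorem step_of_not_ijMove (hS : Step G C C') (hφ : EdgePhase C i j n)
    (h : ¬ IJMove G C C' i j) : EdgePhase C' i j n := by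
  have hij := hS.p_eq_some_iff (fun hm => h (Or.inl hm))
  have hji := hS.p_eq_some_iff (fun hm => h (Or.inr hm))
  cases hφ with
  | unlinked h₁ h₂ => exact .unlinked (hij.not.2 h₁) (hji.not.2 h₂)
  | courting h₁ h₂ hm =>
    refine .courting (hij.2 h₁) (hji.not.2 h₂) fun hm' => ?_
    rcases hS.m_eq_true hm' with hmj | ⟨k, -, hjk, hkj⟩
    · obtain ⟨k, hk, hc⟩ := hm hmj
      exact ⟨k, hk, hS.couple hc⟩
    · refine ⟨k, ?_, hS.couple ⟨hjk, hkj⟩⟩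
      rintro rfl
      exact h₂ hjk
  | married hc => exact .married (hS.couple hc)
  | jilted h₁ hk hc => exact .jilted (hij.not.2 h₁) hk (hS.couple hc)


theorem doesSeductionTo_of_ijMove (hij : i < j) (h₁ : C.p i ≠ some j) (h₂ : C.p j ≠ some i)
    (h : IJMove G C C' i j) : DoesSeductionTo G C C' i j := by
  rcases h with (hmar | hsed | hab) | hji
  · exact absurd hmar.2.2.1 h₂
  · exact hsed
  · exact absurd hab.2.1 h₁
  · exact (hji.p_eq_some_of_lt hij).elim (absurd · h₁) (absurd · h₂)

theorem courting_of_doesSeductionTo (hij : i < j) (hS : Step G C C') (h₁ : C.p i ≠ some j)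
    (h₂ : C.p j ≠ some i) (hsed : DoesSeductionTo G C C' i j) : EdgePhase C' i j 1 := by
  have hji := hS.p_eq_some_iff fun hm => (hm.p_eq_some_of_lt hij).elim h₁ h₂
  refine .courting hsed.2.2.2.2.2.2.1 (hji.not.2 h₂) fun hm => ?_
  simp [hS.m_eq_false hsed.2.2.1 hsed.2.2.2.2.1] at hm

theorem step_of_ijMove_of_courting (hij : i < j) (hS : Step G C C') (h₁ : C.p i = some j)
    (h₂ : C.p j ≠ some i) (hm : C.m j = true → ∃ k ≠ i, Couple C j k)
    (h : IJMove G C C' i j) : EdgePhase C' i j 0 := by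
  -- as `i` already points to `j`, its only possible move towards `j` is an Abandonment
  have hmove_i : MSAMoveTo G C C' i j → C.m j = true := fun hm =>
    ((hm.doesAbandonmentFrom_of_p_eq_some h₁).m_eq_true_or_le).resolve_right hij.not_ge
  rcases h with hi | (hmar | hsed | hab)
  · obtain ⟨k, hk, hc⟩ := hm (hmove_i hi)
    refine .jilted ?_ hk (hS.couple hc)
    simp [(hi.doesAbandonmentFrom_of_p_eq_some h₁).2.2.1]
  · have hi := hS.p_eq_some_iff fun hm => absurd (hmove_i hm) (by simp [hmar.1.m_eq_false])
    exact .married ⟨hi.2 h₁, hmar.2.2.2.1⟩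
  · exact absurd hsed.2.2.2.1 hij.not_gt
  · exact absurd hab.2.1 h₂

theorem not_ijMove_of_jilted {k : V} (h₁ : C.p i ≠ some j) (hk : k ≠ i) (hc : Couple C j k) :
    ¬ IJMove G C C' i j := by
  rintro ((hmar | hsed | hab) | hj)
  · exact hk (Option.some.inj (hc.1.symm.trans hmar.2.2.1))
  · cases hsed.2.2.1.symm.trans hc.1
  · exact h₁ hab.2.1
  · exact MSAMoveTo.not_of_couple hc i hj

theorem step_of_ijMove (hij : i < j) (hS : Step G C C') (hφ : EdgePhase C i j n)
    (h : IJMove G C C' i j) : ∃ n', n = n' + 1 ∧ EdgePhase C' i j n' := by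
  cases hφ with
  | unlinked h₁ h₂ =>
    exact ⟨1, rfl, courting_of_doesSeductionTo hij hS h₁ h₂ (doesSeductionTo_of_ijMove hij h₁ h₂ h)⟩
  | courting h₁ h₂ hm => exact ⟨0, rfl, step_of_ijMove_of_courting hij hS h₁ h₂ hm h⟩
  | married hc =>
    rcases h with hi | hj
    · exact absurd hi (MSAMoveTo.not_of_couple hc j)
    · exact absurd hj (MSAMoveTo.not_of_couple hc.symm i)
  | jilted h₁ hk hc => exact absurd h (not_ijMove_of_jilted h₁ hk hc)

end EdgePhase

open scoped Classical in
theorem ij_moves_at_most_two_of_no_initial_pointer_general [LinearOrder V]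
    (G : SimpleGraph V)
    (C : ℕ → Config V) (L : ℕ) (hstep : ∀ t, t < L → Step G (C t) (C (t+1)))
    (i j : V) (hlt : i < j)
    (h0i : (C 0).p i ≠ some j) (h0j : (C 0).p j ≠ some i) :
    ((Finset.range L).filter (fun t => IJMove G (C t) (C (t+1)) i j)).card ≤ 2 :=
  Finset.card_filter_range_le_of_phase (R := fun t n => EdgePhase (C t) i j n)
    (.unlinked h0i h0j)
    (fun t ht _ hφ hmove => hφ.step_of_not_ijMove (hstep t ht) hmove)
    (fun t ht _ hφ hmove => hφ.step_of_ijMove hlt (hstep t ht) hmove)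

open scoped Classical in
theorem ij_moves_at_most_two_of_no_initial_pointer [Fintype V] [LinearOrder V]
    (G : SimpleGraph V)
    (C : ℕ → Config V) (L : ℕ) (hstep : ∀ t, t < L → Step G (C t) (C (t+1)))
    (hvalid : Valid G (C 0))
    (i j : V) (hadj : G.Adj i j) (hlt : i < j)
    (h0i : (C 0).p i ≠ some j) (h0j : (C 0).p j ≠ some i) :
    ((Finset.range L).filter (fun t => IJMove G (C t) (C (t+1)) i j)).card ≤ 2 :=
  ij_moves_at_most_two_of_no_initial_pointer_general G C L hstep i j hlt h0i h0j
end

section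
/- If PRmarried(i) holds in some configuration, then PRmarried(i) holds in every configuration reachable from it under the algorithm's step relation. -/
variable {V : Type*}

lemma married_p_fixed [LinearOrder V] (G : SimpleGraph V) {C C' : Config V}
    (hstep : Step G C C') {i j : V} (hpi : C.p i = some j) (hpj : C.p j = some i) :
    C'.p i = C.p i := by
  rcases hstep.2 i with hm | hu
  · rcases hm with hU | ⟨k, hM⟩ | ⟨k, hS⟩ | ⟨k, hA⟩
    · exact hU.2.1
    · exact absurd hM.1.2.1 (by simp [hpi])
    · exact absurd hS.1.2.1 (by simp [hpi])
    · obtain ⟨_, l, _, hpi', hne, _⟩ := hA.1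
      rw [hpi] at hpi'
      exact absurd (by rw [← Option.some_inj.mp hpi']; exact hpj) hne
  · exact hu.1

lemma prmarried_step [LinearOrder V] (G : SimpleGraph V) {C C' : Config V}
    (hstep : Step G C C') {i : V} (h : PRmarried G C.p i) : PRmarried G C'.p i := by
  obtain ⟨j, hadj, hpi, hpj⟩ := h
  exact ⟨j, hadj, by rw [married_p_fixed G hstep hpi hpj, hpi],
    by rw [married_p_fixed G hstep hpj hpi, hpj]⟩

theorem prmarried_persists [Fintype V] [LinearOrder V] (G : SimpleGraph V)
    (C C' : Config V) (hvalid : Valid G C)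
    (hreach : Relation.ReflTransGen (Step G) C C')
    (i : V) (h : PRmarried G C.p i) : PRmarried G C'.p i := by
  induction hreach with
  | refl => exact h
  | tail _ hstep ih => exact prmarried_step G hstep ih
end

section
/- The Seduction rule never creates a cycle of pointer values: if in a configuration the p-values contain no directed cycle (i.e., the relation i → p_i restricted to non-null pointers is acyclic), and a step consists only of Seduction moves, then the resulting configuration's p-values also contain no directed cycle. -/
variable {V : Type*}

def HasPointerCycle (p : V → Option V) : Prop :=
  ∃ (k : ℕ) (f : ℕ → V), 0 < k ∧ (∀ x, x < k → p (f x) = some (f (x+1))) ∧ f k = f 0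

/-!
A Seduction move only redirects a null pointer `i` to a node `j > i` whose own pointer is null.
On a new cycle through such an `i`, the node `j` must have gained a pointer as well, so it too
was redirected, to an even larger node; the largest redirected node of the cycle is then a
contradiction. Hence a cycle after the step consists of old pointers only, and was a cycle before.
-/

def AttachesForward [LinearOrder V] (p p' : V → Option V) : Prop :=
  ∀ i, p' i = p i ∨ (p i = none ∧ ∃ j, p' i = some j ∧ p j = none ∧ i < j)

theorem HasPointerCycle.of_attachesForward [LinearOrder V] {p p' : V → Option V}
    (hpp' : AttachesForward p p') (hcyc : HasPointerCycle p') : HasPointerCycle p := by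
  classical
  obtain ⟨k, f, hk, hstep, hwrap⟩ := hcyc
  have hsucc : ∀ x < k, ∃ y < k, f y = f (x + 1) := by
    intro x hx
    rcases (Nat.succ_le_of_lt hx).lt_or_eq with hlt | heq
    · exact ⟨x + 1, hlt, rfl⟩
    · exact ⟨0, hk, by rw [← hwrap, ← heq]⟩
  have hmoved_succ : ∀ x < k, p' (f x) ≠ p (f x) →
      ∃ y < k, p' (f y) ≠ p (f y) ∧ f x < f y := by
    intro x hx hmoved
    obtain ⟨-, j, hj, hj_none, hlt⟩ := (hpp' (f x)).resolve_left hmoved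
    obtain rfl : j = f (x + 1) := Option.some_injective _ (hj.symm.trans (hstep x hx))
    obtain ⟨y, hy, hfy⟩ := hsucc x hx
    refine ⟨y, hy, ?_, hfy ▸ hlt⟩
    rw [hstep y hy, hfy, hj_none]
    exact Option.some_ne_none _
  by_cases hmoved : ∃ x < k, p' (f x) ≠ p (f x)
  · obtain ⟨x₀, hx₀, hx₀_moved⟩ := hmoved
    let moved := (Finset.range k).filter fun x => p' (f x) ≠ p (f x)
    obtain ⟨x, hx_mem, hx_max⟩ := moved.exists_max_image f
      ⟨x₀, Finset.mem_filter.2 ⟨Finset.mem_range.2 hx₀, hx₀_moved⟩⟩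
    obtain ⟨hx, hx_moved⟩ := Finset.mem_filter.1 hx_mem
    obtain ⟨y, hy, hy_moved, hxy⟩ := hmoved_succ x (Finset.mem_range.1 hx) hx_moved
    exact absurd (hx_max y (Finset.mem_filter.2 ⟨Finset.mem_range.2 hy, hy_moved⟩)) hxy.not_ge
  · push Not at hmoved
    exact ⟨k, f, hk, fun x hx => hmoved x hx ▸ hstep x hx, hwrap⟩

theorem attachesForward_of_seduction_or_unchanged [LinearOrder V] {G : SimpleGraph V}
    {C C' : Config V} (honly : ∀ i, (∃ j, DoesSeductionTo G C C' i j) ∨ Unchanged C C' i) :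
    AttachesForward C.p C'.p := fun i => by
  rcases honly i with ⟨j, hseduce⟩ | hunchanged
  · obtain ⟨⟨-, hi, -⟩, -, hj, hlt, -, -, hij, -⟩ := hseduce
    exact Or.inr ⟨hi, j, hij, hj, hlt⟩
  · exact Or.inl hunchanged.1

theorem seduction_preserves_acyclicity_general [LinearOrder V] (G : SimpleGraph V)
    (C C' : Config V)
    (honly : ∀ i, (∃ j, DoesSeductionTo G C C' i j) ∨ Unchanged C C' i)
    (hacyc : ¬ HasPointerCycle C.p) : ¬ HasPointerCycle C'.p :=
  mt (HasPointerCycle.of_attachesForward (attachesForward_of_seduction_or_unchanged honly)) hacyc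

theorem seduction_preserves_acyclicity [Fintype V] [LinearOrder V] (G : SimpleGraph V)
    (C C' : Config V) (hvalid : Valid G C)
    (hmove : ∃ i j, DoesSeductionTo G C C' i j)
    (honly : ∀ i, (∃ j, DoesSeductionTo G C C' i j) ∨ Unchanged C C' i)
    (hacyc : ¬ HasPointerCycle C.p) : ¬ HasPointerCycle C'.p :=
  seduction_preserves_acyclicity_general G C C' honly hacyc
end
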